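/- arXiv:2207.12023 — 4 statements merged into one kernel-verified Lean document; each statement's English description precedes it below -/
import Mathlib

section
/- Let Φ be proper, convex, lsc on a Hilbert space H with argmin Φ ≠ ∅, let λ, ε > 0, and let x_{ε,λ} be the unique minimizer of x ↦ Φ_λ(x) + (ε/2)‖x‖². Then ‖x_{ε,λ}‖ ≤ ‖x*‖, where x* is the element of minimal norm of argmin Φ. -/
noncomputable def moreau {H : Type*} [NormedAddCommGroup H] [InnerProductSpace ℝ H]
    (Φ : H → ℝ) (l : ℝ) (x : H) : ℝ :=
  ⨅ y : H, (Φ y + ‖x - y‖ ^ 2 / (2 * l))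

/-- The Tikhonov-regularized minimizer has norm at most that of the minimal-norm minimizer. -/
theorem tikhonov_norm_le {H : Type*} [NormedAddCommGroup H] [InnerProductSpace ℝ H]
    [CompleteSpace H] (Φ : H → ℝ) (hconv : ConvexOn ℝ Set.univ Φ)
    (hlsc : LowerSemicontinuous Φ) (l ε : ℝ) (hl : 0 < l) (hε : 0 < ε)
    (xel : H)
    (hxel : IsMinOn (fun x => moreau Φ l x + ε / 2 * ‖x‖ ^ 2) Set.univ xel)
    (xstar : H) (hxstar : IsMinOn Φ Set.univ xstar)
    (hmin : ∀ y, IsMinOn Φ Set.univ y → ‖xstar‖ ≤ ‖y‖) :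
    ‖xel‖ ≤ ‖xstar‖ := by
  have hbound : ∀ x y : H, Φ xstar ≤ Φ y + ‖x - y‖ ^ 2 / (2 * l) := by
    intro x y
    have h1 : Φ xstar ≤ Φ y := hxstar (Set.mem_univ y)
    have h2 : 0 ≤ ‖x - y‖ ^ 2 / (2 * l) :=
      div_nonneg (by positivity) (by linarith)
    linarith
  have hlow : ∀ x : H, Φ xstar ≤ moreau Φ l x := fun x =>
    le_ciInf (hbound x)
  have hup : moreau Φ l xstar ≤ Φ xstar := by
    have := ciInf_le (f := fun y => Φ y + ‖xstar - y‖ ^ 2 / (2 * l))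
      ⟨Φ xstar, fun r ⟨y, hy⟩ => hy ▸ hbound xstar y⟩ xstar
    simpa [moreau] using this
  have hle := hxel (Set.mem_univ xstar)
  simp only [Set.mem_setOf_eq] at hle
  have key : ε / 2 * ‖xel‖ ^ 2 ≤ ε / 2 * ‖xstar‖ ^ 2 := by
    have := hlow xel
    linarith [hup]
  have hsq : ‖xel‖ ^ 2 ≤ ‖xstar‖ ^ 2 := by
    have hε2 : 0 < ε / 2 := by linarith
    exact le_of_mul_le_mul_left (by linarith) hε2
  nlinarith [norm_nonneg xel, norm_nonneg xstar]
end

section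
/- Let Φ be proper, convex, lsc on a Hilbert space with argmin Φ ≠ ∅, and let λ, ε: [t₀,∞) → (0,∞) with λ(t)ε(t) → 0 and ε(t) → 0 as t → ∞. Let x_{ε(t),λ(t)} minimize x ↦ Φ_{λ(t)}(x) + (ε(t)/2)‖x‖². Then x_{ε(t),λ(t)} converges strongly to the minimal norm element x* of argmin Φ as t → ∞. -/
open Filter Topology Set

theorem cauchy_map_of_dist_sq_le {α E : Type*} [PseudoMetricSpace E] {F : Filter α} [F.NeBot]
    {f : α → E} {h : α × α → ℝ} (hh : Tendsto h (F ×ˢ F) (𝓝 0))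
    (hfh : ∀ᶠ p in F ×ˢ F, dist (f p.1) (f p.2) ^ 2 ≤ h p) : Cauchy (map f F) := by
  refine cauchy_map_iff'.2 (tendsto_uniformity_iff_dist_tendsto_zero.2 ?_)
  have hsqrt : Tendsto (fun p => √(h p)) (F ×ˢ F) (𝓝 0) := by simpa using hh.sqrt
  refine squeeze_zero' (.of_forall fun _ => dist_nonneg) ?_ hsqrt
  filter_upwards [hfh] with p hp using Real.le_sqrt_of_sq_le hp

theorem LowerSemicontinuous.le_of_tendsto {X α : Type*} [TopologicalSpace X] {f : X → ℝ}
    (hf : LowerSemicontinuous f) {F : Filter α} [F.NeBot] {y : α → X} {p : X}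
    (hy : Tendsto y F (𝓝 p)) {g : α → ℝ} {b : ℝ} (hg : Tendsto g F (𝓝 b))
    (hfg : ∀ᶠ a in F, f (y a) ≤ g a) : f p ≤ b := by
  by_contra! hbp
  obtain ⟨r, hbr, hrp⟩ := exists_between hbp
  obtain ⟨a, hra, hgr, hfga⟩ :=
    ((hy.eventually (hf p r hrp)).and ((hg.eventually (gt_mem_nhds hbr)).and hfg)).exists
  linarith

theorem IsMinOn.eq_of_norm_le {E : Type*} [NormedAddCommGroup E] [NormedSpace ℝ E]
    [StrictConvexSpace ℝ E] {Φ : E → ℝ} (hconv : ConvexOn ℝ univ Φ) {x p : E}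
    (hx : IsMinOn Φ univ x) (hmin : ∀ y, IsMinOn Φ univ y → ‖x‖ ≤ ‖y‖)
    (hp : IsMinOn Φ univ p) (hpx : ‖p‖ ≤ ‖x‖) : p = x := by
  by_contra hne
  have hmid : IsMinOn Φ univ ((1 / 2 : ℝ) • (p + x)) := by
    have hconvex := hconv.convex_le (Φ x)
    have : (1 / 2 : ℝ) • (p + x) ∈ {y ∈ univ | Φ y ≤ Φ x} := by
      rw [smul_add]
      exact hconvex ⟨mem_univ p, hp (mem_univ x)⟩ ⟨mem_univ x, le_rfl⟩ (by norm_num) (by norm_num)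
        (by norm_num)
    exact isMinOn_univ_iff.2 fun y => this.2.trans (hx (mem_univ y))
  have hlt := (norm_midpoint_lt_iff (le_antisymm hpx (hmin p hp))).2 hne
  linarith [hmin _ hmid]

theorem IsMinOn.eq_of_forall_add_mul_norm_sub_sq_le {E : Type*} [NormedAddCommGroup E]
    {F : E → ℝ} {x x₀ : E} {β : ℝ} (hβ : 0 < β)
    (hgrowth : ∀ z, F x₀ + β * ‖z - x₀‖ ^ 2 ≤ F z) (hx : IsMinOn F univ x) : x = x₀ := by
  have h1 := hgrowth x
  have h2 := isMinOn_univ_iff.1 hx x₀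
  have h3 : ‖x - x₀‖ ^ 2 = 0 := le_antisymm (by nlinarith) (sq_nonneg _)
  simpa [sub_eq_zero] using h3

theorem inv_add_inv_inv_mul_norm_add_sq_le {E : Type*} [SeminormedAddCommGroup E] {a b : ℝ}
    (ha : 0 < a) (hb : 0 < b) (u v : E) :
    (a⁻¹ + b⁻¹)⁻¹ * ‖u + v‖ ^ 2 ≤ a * ‖u‖ ^ 2 + b * ‖v‖ ^ 2 := by
  have h1 : ‖u + v‖ ^ 2 ≤ (‖u‖ + ‖v‖) ^ 2 := pow_le_pow_left₀ (norm_nonneg _) (norm_add_le u v) 2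
  have h2 : (a⁻¹ + b⁻¹)⁻¹ = a * b / (a + b) := by field_simp; ring
  rw [h2, div_mul_eq_mul_div, div_le_iff₀ (by positivity)]
  nlinarith [sq_nonneg (a * ‖u‖ - b * ‖v‖),
    mul_le_mul_of_nonneg_left h1 (by positivity : 0 ≤ a * b)]

section MidpointStronglyConvex

variable {E : Type*} [NormedAddCommGroup E] [NormedSpace ℝ E] {f : E → ℝ} {a : ℝ}

theorem exists_isMinOn_of_midpoint_le [CompleteSpace E] (hf : LowerSemicontinuous f)
    (hbdd : BddBelow (range f)) (ha : 0 < a)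
    (hmid : ∀ y z, f (midpoint ℝ y z) ≤ (f y + f z) / 2 - a * ‖y - z‖ ^ 2) :
    ∃ p, IsMinOn f univ p := by
  obtain ⟨u, -, hu, humem⟩ := exists_seq_tendsto_sInf (range_nonempty f) hbdd
  choose y hy using humem
  set m := sInf (range f)
  have hm : ∀ z, m ≤ f z := fun z => csInf_le hbdd (mem_range_self z)
  have hcauchy : CauchySeq y := by
    refine cauchy_map_of_dist_sq_le (h := fun n => (u n.1 - m + (u n.2 - m)) / (2 * a)) ?_
      (.of_forall fun n => ?_)
    · simpa using (((hu.comp tendsto_fst).sub_const m).add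
        ((hu.comp tendsto_snd).sub_const m)).div_const (2 * a)
    · have h1 := hmid (y n.1) (y n.2)
      have h2 := hm (midpoint ℝ (y n.1) (y n.2))
      rw [hy, hy] at h1
      rw [dist_eq_norm, le_div_iff₀ (by positivity)]
      linarith
  obtain ⟨p, hp⟩ := cauchySeq_tendsto_of_complete hcauchy
  have hpm : f p ≤ m := hf.le_of_tendsto hp hu (.of_forall fun n => (hy n).le)
  exact ⟨p, isMinOn_univ_iff.2 fun z => hpm.trans (hm z)⟩

theorem IsMinOn.add_mul_norm_sub_sq_le_of_midpoint_le
    (hmid : ∀ y z, f (midpoint ℝ y z) ≤ (f y + f z) / 2 - a * ‖y - z‖ ^ 2) {p : E}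
    (hp : IsMinOn f univ p) (y : E) : f p + 2 * a * ‖y - p‖ ^ 2 ≤ f y := by
  have h1 := hmid p y
  have h2 := isMinOn_univ_iff.1 hp (midpoint ℝ p y)
  rw [norm_sub_rev] at h1
  linarith

end MidpointStronglyConvex

/-- In proximal notation `p = prox_{Φ / (2c)} 0`; the growth term `c / 2 ‖y - p‖²` is the one
provided by the `2c`-strong convexity of `Φ + c ‖·‖²`. -/
def IsTikhonovMinimizer {E : Type*} [NormedAddCommGroup E] (Φ : E → ℝ) (c : ℝ) (p : E) : Prop :=
  ∀ y, Φ p + c * ‖p‖ ^ 2 + c / 2 * ‖y - p‖ ^ 2 ≤ Φ y + c * ‖y‖ ^ 2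

namespace IsTikhonovMinimizer

variable {E : Type*} [NormedAddCommGroup E] {Φ : E → ℝ} {c c' : ℝ} {p p' : E}

theorem le_add (hp : IsTikhonovMinimizer Φ c p) (hc : 0 ≤ c) (y : E) :
    Φ p ≤ Φ y + c * ‖y‖ ^ 2 := by
  have := hp y
  nlinarith [norm_nonneg p, norm_nonneg (y - p)]

theorem norm_le (hp : IsTikhonovMinimizer Φ c p) (hc : 0 < c) {x : E} (hx : IsMinOn Φ univ x) :
    ‖p‖ ≤ ‖x‖ := by
  have h1 := hp x
  have h2 : Φ x ≤ Φ p := hx (mem_univ p)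
  have : ‖p‖ ^ 2 ≤ ‖x‖ ^ 2 := by nlinarith [norm_nonneg (x - p)]
  exact le_of_sq_le_sq this (norm_nonneg x)

theorem norm_sub_sq_le (hp : IsTikhonovMinimizer Φ c p) (hp' : IsTikhonovMinimizer Φ c' p')
    (hc : 0 < c) (hcc' : c ≤ c') : ‖p - p'‖ ^ 2 ≤ 2 * (‖p‖ ^ 2 - ‖p'‖ ^ 2) := by
  have h1 := hp p'
  have h2 := hp' p
  rw [norm_sub_rev] at h1
  have hsum : (c + c') / 2 * ‖p - p'‖ ^ 2 ≤ (c' - c) * (‖p‖ ^ 2 - ‖p'‖ ^ 2) := by linarith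
  rcases hcc'.eq_or_lt with rfl | hlt
  · have : ‖p - p'‖ ^ 2 = 0 := by nlinarith [sq_nonneg ‖p - p'‖]
    rw [sq_eq_zero_iff, norm_eq_zero, sub_eq_zero] at this
    simp [this]
  · have hX : 0 ≤ ‖p‖ ^ 2 - ‖p'‖ ^ 2 := by nlinarith [sq_nonneg ‖p - p'‖]
    nlinarith

end IsTikhonovMinimizer

section TikhonovPath

variable {E : Type*} [NormedAddCommGroup E] {Φ : E → ℝ} {q : ℝ → E}

theorem cauchy_map_nhdsGT_of_isTikhonovMinimizer
    (hq : ∀ c > 0, IsTikhonovMinimizer Φ c (q c)) {x : E} (hx : IsMinOn Φ univ x) :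
    Cauchy (map q (𝓝[>] 0)) := by
  have hanti : AntitoneOn (fun c => ‖q c‖ ^ 2) (Ioi 0) := fun c hc c' _ hcc' => by
    have := (hq c hc).norm_sub_sq_le (hq c' (hc.trans_le hcc')) hc hcc'
    nlinarith [sq_nonneg ‖q c - q c'‖]
  have hbdd : BddAbove ((fun c => ‖q c‖ ^ 2) '' Ioi 0) := by
    refine ⟨‖x‖ ^ 2, ?_⟩
    rintro _ ⟨c, hc, rfl⟩
    exact pow_le_pow_left₀ (norm_nonneg _) ((hq c hc).norm_le hc hx) 2
  have hlim := hanti.tendsto_nhdsGT hbdd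
  refine cauchy_map_of_dist_sq_le (h := fun p => 2 * |‖q p.1‖ ^ 2 - ‖q p.2‖ ^ 2|) ?_ ?_
  · simpa using ((hlim.comp tendsto_fst).sub (hlim.comp tendsto_snd)).abs.const_mul 2
  · filter_upwards [prod_mem_prod self_mem_nhdsWithin self_mem_nhdsWithin]
      with ⟨c, c'⟩ ⟨hc, hc'⟩
    rw [dist_eq_norm]
    rcases le_total c c' with h | h
    · exact ((hq c hc).norm_sub_sq_le (hq c' hc') hc h).trans (by gcongr; exact le_abs_self _)
    · rw [norm_sub_rev, abs_sub_comm]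
      exact ((hq c' hc').norm_sub_sq_le (hq c hc) hc' h).trans (by gcongr; exact le_abs_self _)

theorem tendsto_nhdsGT_of_isTikhonovMinimizer [NormedSpace ℝ E] [StrictConvexSpace ℝ E]
    [CompleteSpace E] (hconv : ConvexOn ℝ univ Φ) (hlsc : LowerSemicontinuous Φ)
    (hq : ∀ c > 0, IsTikhonovMinimizer Φ c (q c)) {x : E} (hx : IsMinOn Φ univ x)
    (hmin : ∀ y, IsMinOn Φ univ y → ‖x‖ ≤ ‖y‖) : Tendsto q (𝓝[>] 0) (𝓝 x) := by
  obtain ⟨p, hp⟩ := CompleteSpace.complete (cauchy_map_nhdsGT_of_isTikhonovMinimizer hq hx)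
  have hpos : ∀ᶠ c in 𝓝[>] (0 : ℝ), 0 < c := self_mem_nhdsWithin
  have hbound : Tendsto (fun c : ℝ => Φ x + c * ‖x‖ ^ 2) (𝓝[>] 0) (𝓝 (Φ x)) := by
    have hc : Tendsto (fun c : ℝ => c) (𝓝[>] 0) (𝓝 0) :=
      tendsto_nhdsWithin_of_tendsto_nhds tendsto_id
    simpa using (hc.mul_const (‖x‖ ^ 2)).const_add (Φ x)
  have hΦp : Φ p ≤ Φ x := hlsc.le_of_tendsto hp hbound <| by
    filter_upwards [hpos] with c hc using (hq c hc).le_add hc.le x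
  have hpmin : IsMinOn Φ univ p := isMinOn_univ_iff.2 fun y => hΦp.trans (hx (mem_univ y))
  have hpx : ‖p‖ ≤ ‖x‖ := le_of_tendsto (tendsto_norm.comp hp) <| by
    filter_upwards [hpos] with c hc using (hq c hc).norm_le hc hx
  rwa [← hx.eq_of_norm_le hconv hmin hpmin hpx]

end TikhonovPath

section InnerProduct

variable {H : Type*} [NormedAddCommGroup H] [InnerProductSpace ℝ H] {Φ : H → ℝ}

theorem norm_midpoint_sq_real (y z : H) :
    ‖midpoint ℝ y z‖ ^ 2 = (‖y‖ ^ 2 + ‖z‖ ^ 2) / 2 - ‖y - z‖ ^ 2 / 4 := by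
  rw [midpoint_eq_smul_add, norm_smul, mul_pow, norm_add_sq_real, norm_sub_sq_real]
  norm_num
  ring

theorem ConvexOn.add_mul_norm_sq_midpoint_le (hconv : ConvexOn ℝ univ Φ) (c : ℝ) (y z : H) :
    Φ (midpoint ℝ y z) + c * ‖midpoint ℝ y z‖ ^ 2
      ≤ (Φ y + c * ‖y‖ ^ 2 + (Φ z + c * ‖z‖ ^ 2)) / 2 - c / 4 * ‖y - z‖ ^ 2 := by
  have h := hconv.2 (mem_univ y) (mem_univ z) (by norm_num : (0 : ℝ) ≤ 2⁻¹)
    (by norm_num : (0 : ℝ) ≤ 2⁻¹) (by norm_num)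
  rw [← smul_add, ← invOf_eq_inv, ← midpoint_eq_smul_add, smul_eq_mul, smul_eq_mul,
    invOf_eq_inv] at h
  rw [norm_midpoint_sq_real]
  linarith

theorem exists_isTikhonovMinimizer [CompleteSpace H] (hconv : ConvexOn ℝ univ Φ)
    (hlsc : LowerSemicontinuous Φ) (hbdd : BddBelow (range Φ)) {c : ℝ} (hc : 0 < c) :
    ∃ p, IsTikhonovMinimizer Φ c p := by
  set f := fun y => Φ y + c * ‖y‖ ^ 2
  have hmid : ∀ y z, f (midpoint ℝ y z) ≤ (f y + f z) / 2 - c / 4 * ‖y - z‖ ^ 2 :=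
    hconv.add_mul_norm_sq_midpoint_le c
  have hf : LowerSemicontinuous f :=
    hlsc.add (by fun_prop : Continuous fun y : H => c * ‖y‖ ^ 2).lowerSemicontinuous
  have hfbdd : BddBelow (range f) := by
    obtain ⟨B, hB⟩ := hbdd
    refine ⟨B, ?_⟩
    rintro _ ⟨y, rfl⟩
    show B ≤ Φ y + c * ‖y‖ ^ 2
    nlinarith [hB (mem_range_self y), norm_nonneg y]
  obtain ⟨p, hp⟩ := exists_isMinOn_of_midpoint_le hf hfbdd (by positivity) hmid
  refine ⟨p, fun y => ?_⟩
  have := hp.add_mul_norm_sub_sq_le_of_midpoint_le hmid y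
  linarith

end InnerProduct

section Moreau

variable {H : Type*} [NormedAddCommGroup H] [InnerProductSpace ℝ H] {Φ : H → ℝ}

theorem moreau_le (hbdd : BddBelow (range Φ)) {l : ℝ} (hl : 0 ≤ l) (x y : H) :
    moreau Φ l x ≤ Φ y + ‖x - y‖ ^ 2 / (2 * l) := by
  obtain ⟨B, hB⟩ := hbdd
  refine ciInf_le ⟨B, ?_⟩ y
  rintro _ ⟨z, rfl⟩
  have := hB (mem_range_self z)
  have : 0 ≤ ‖x - z‖ ^ 2 / (2 * l) := by positivity
  linarith

theorem norm_sub_sq_div_add_mul_norm_sq_eq {L E : ℝ} (hL : L ≠ 0) (hk : 1 + L * E ≠ 0) (x y : H) :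
    ‖x - y‖ ^ 2 / (2 * L) + E / 2 * ‖x‖ ^ 2
      = E / (2 * (1 + L * E)) * ‖y‖ ^ 2
        + (1 + L * E) / (2 * L) * ‖x - (1 + L * E)⁻¹ • y‖ ^ 2 := by
  rw [norm_sub_sq_real, norm_sub_sq_real, real_inner_smul_right, norm_smul, mul_pow,
    Real.norm_eq_abs, sq_abs]
  field_simp
  ring

theorem eq_smul_of_isMinOn_moreau_add_mul_norm_sq (hbdd : BddBelow (range Φ)) {L E : ℝ}
    (hL : 0 < L) (hE : 0 < E) {p : H} (hp : IsTikhonovMinimizer Φ (E / (2 * (1 + L * E))) p)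
    {x : H} (hx : IsMinOn (fun x => moreau Φ L x + E / 2 * ‖x‖ ^ 2) univ x) :
    x = (1 + L * E)⁻¹ • p := by
  set k := 1 + L * E
  set c := E / (2 * k)
  have hk : 0 < k := by positivity
  have hsquare := norm_sub_sq_div_add_mul_norm_sq_eq (H := H) hL.ne' hk.ne'
  -- With these weights, `a ‖k⁻¹ • (y - p)‖² + b ‖z - k⁻¹ • y‖²` is what the completed square
  -- and the growth of `Φ + c ‖·‖²` at `p` leave above `Φ p + c ‖p‖²`.
  set a := c * k ^ 2 / 2
  set b := k / (2 * L)
  have hcenter : moreau Φ L (k⁻¹ • p) + E / 2 * ‖k⁻¹ • p‖ ^ 2 ≤ Φ p + c * ‖p‖ ^ 2 := by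
    have := hsquare (k⁻¹ • p) p
    rw [sub_self, norm_zero] at this
    linarith [moreau_le hbdd hL.le (k⁻¹ • p) p]
  refine hx.eq_of_forall_add_mul_norm_sub_sq_le (β := (a⁻¹ + b⁻¹)⁻¹) (by positivity) fun z => ?_
  have hlower : Φ p + c * ‖p‖ ^ 2 + (a⁻¹ + b⁻¹)⁻¹ * ‖z - k⁻¹ • p‖ ^ 2 - E / 2 * ‖z‖ ^ 2
      ≤ moreau Φ L z := by
    refine le_ciInf fun y => ?_
    have h1 := hp y
    have h2 := hsquare z y
    have h3 := inv_add_inv_inv_mul_norm_add_sq_le (by positivity : 0 < a) (by positivity : 0 < b)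
      (k⁻¹ • (y - p)) (z - k⁻¹ • y)
    rw [show k⁻¹ • (y - p) + (z - k⁻¹ • y) = z - k⁻¹ • p by rw [smul_sub]; abel, norm_smul,
      mul_pow, Real.norm_eq_abs, sq_abs] at h3
    have h4 : a * ((k⁻¹) ^ 2 * ‖y - p‖ ^ 2) = c / 2 * ‖y - p‖ ^ 2 := by
      simp only [a]
      field_simp
    linarith
  linarith

end Moreau

/-- If λ(t)ε(t) → 0 and ε(t) → 0, the Tikhonov-regularized minimizers converge strongly to
the minimal-norm minimizer of Φ. -/
theorem tikhonov_strong_convergence {H : Type*} [NormedAddCommGroup H]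
    [InnerProductSpace ℝ H] [CompleteSpace H] (Φ : H → ℝ)
    (hconv : ConvexOn ℝ Set.univ Φ) (hlsc : LowerSemicontinuous Φ)
    (t₀ : ℝ) (l ε : ℝ → ℝ) (hl : ∀ t ≥ t₀, 0 < l t) (hε : ∀ t ≥ t₀, 0 < ε t)
    (hle : Filter.Tendsto (fun t => l t * ε t) Filter.atTop (nhds 0))
    (hε0 : Filter.Tendsto ε Filter.atTop (nhds 0))
    (xel : ℝ → H)
    (hxel : ∀ t ≥ t₀,
      IsMinOn (fun x => moreau Φ (l t) x + ε t / 2 * ‖x‖ ^ 2) Set.univ (xel t))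
    (xstar : H) (hxstar : IsMinOn Φ Set.univ xstar)
    (hmin : ∀ y, IsMinOn Φ Set.univ y → ‖xstar‖ ≤ ‖y‖) :
    Filter.Tendsto xel Filter.atTop (nhds xstar) := by
  have hbdd : BddBelow (range Φ) := ⟨Φ xstar, by rintro _ ⟨y, rfl⟩; exact hxstar (mem_univ y)⟩
  choose! q hq using fun c (hc : c > 0) => exists_isTikhonovMinimizer hconv hlsc hbdd hc
  have hk : Tendsto (fun t => 1 + l t * ε t) atTop (𝓝 1) := by simpa using hle.const_add 1
  have hc : Tendsto (fun t => ε t / (2 * (1 + l t * ε t))) atTop (𝓝[>] 0) := by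
    refine tendsto_nhdsWithin_iff.2
      ⟨by simpa [Pi.div_def] using hε0.div (hk.const_mul 2) (by norm_num), ?_⟩
    filter_upwards [eventually_ge_atTop t₀] with t ht
    have hlt := hl t ht
    have hεt := hε t ht
    exact div_pos hεt (by positivity)
  have hlim := (hk.inv₀ one_ne_zero).smul
    ((tendsto_nhdsGT_of_isTikhonovMinimizer hconv hlsc hq hxstar hmin).comp hc)
  rw [inv_one, one_smul] at hlim
  refine hlim.congr' ?_
  filter_upwards [eventually_ge_atTop t₀] with t ht
  have hlt := hl t ht
  have hεt := hε t ht
  exact (eq_smul_of_isMinOn_moreau_add_mul_norm_sq hbdd hlt hεt (hq _ (by positivity))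
    (hxel t ht)).symm
end

section
/- Let H be a real Hilbert space, α > 0, L ∈ H, and x: [t₀,∞) → H continuously differentiable with x(t) + (t/α)·x'(t) → L as t → ∞. Then x(t) → L as t → ∞. -/
/-!
Multiplying by the integrating factor `t ^ α` turns the hypothesis into a statement about a
derivative: `d/dt (t ^ α • (x t - L)) = (α * t ^ (α - 1)) • (x t + (t / α) • x' t - L)`, which is
`o(α * t ^ (α - 1)) = o(d/dt t ^ α)`. A vector-valued l'Hôpital rule, proved with the mean value
inequality, then gives `t ^ α • (x t - L) = o(t ^ α)`, that is `x t → L`.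
-/

open Filter Asymptotics Topology

section

variable {E : Type*} [NormedAddCommGroup E] [NormedSpace ℝ E]

theorem isLittleO_atTop_of_isLittleO_deriv {g g' : ℝ → E} {φ φ' : ℝ → ℝ}
    (hg : ∀ᶠ t in atTop, HasDerivAt g (g' t) t) (hφ : ∀ᶠ t in atTop, HasDerivAt φ (φ' t) t)
    (hφ' : ∀ᶠ t in atTop, 0 ≤ φ' t) (hφ_top : Tendsto φ atTop atTop) (h : g' =o[atTop] φ') :
    g =o[atTop] φ := by
  rw [isLittleO_iff]
  intro ε hε
  obtain ⟨T, hT⟩ := eventually_atTop.1 <| hg.and <| hφ.and <| hφ'.and <|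
    (h.def (half_pos hε)).and (hφ_top.eventually_ge_atTop 0)
  choose hgT hφT hφ'_nonneg hg'_le hφ_nonneg using hT
  have hB : ∀ s, T ≤ s →
      HasDerivAt (fun s => ‖g T‖ + ε / 2 * (φ s - φ T)) (ε / 2 * φ' s) s := fun s hs =>
    (((hφT s hs).sub_const (φ T)).const_mul (ε / 2)).const_add _
  have hbound : ∀ t, T ≤ t → ‖g t‖ ≤ ‖g T‖ + ε / 2 * (φ t - φ T) := fun t ht =>
    image_norm_le_of_norm_deriv_right_le_deriv_boundary' (a := T) (b := t)
      (fun s hs => (hgT s hs.1).continuousAt.continuousWithinAt)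
      (fun s hs => (hgT s hs.1).hasDerivWithinAt) (by simp)
      (fun s hs => (hB s hs.1).continuousAt.continuousWithinAt)
      (fun s hs => (hB s hs.1).hasDerivWithinAt)
      (fun s hs => (Real.norm_of_nonneg (hφ'_nonneg s hs.1)) ▸ hg'_le s hs.1)
      ⟨ht, le_rfl⟩
  filter_upwards [eventually_ge_atTop T, hφ_top.eventually_ge_atTop 0,
    (hφ_top.const_mul_atTop (half_pos hε)).eventually_ge_atTop ‖g T‖] with t hTt hφt hφt_large
  rw [Real.norm_of_nonneg hφt]
  nlinarith [hbound t hTt, hφ_nonneg T le_rfl]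

theorem tendsto_nhds_of_smul_sub_isLittleO {l : Filter ℝ} {φ : ℝ → ℝ} {u : ℝ → E} {L : E}
    (hφ : ∀ᶠ t in l, φ t ≠ 0) (h : (fun t => φ t • (u t - L)) =o[l] φ) :
    Tendsto u l (𝓝 L) := by
  rw [← tendsto_sub_nhds_zero_iff, ← isLittleO_one_iff ℝ]
  refine ((isBigO_refl (fun t => (φ t)⁻¹) l).smul_isLittleO h).congr' ?_ ?_ <;>
    filter_upwards [hφ] with t ht
  · rw [smul_smul, inv_mul_cancel₀ ht, one_smul]
  · rw [smul_eq_mul, inv_mul_cancel₀ ht]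

theorem hasDerivAt_rpow_smul_sub {x : ℝ → E} {x' L : E} {t α : ℝ} (ht : 0 < t) (hα : α ≠ 0)
    (hx : HasDerivAt x x' t) :
    HasDerivAt (fun s => s ^ α • (x s - L))
      ((α * t ^ (α - 1)) • (x t + (t / α) • x' - L)) t := by
  have hweight : α * t ^ (α - 1) * (t / α) = t ^ α := by
    rw [Real.rpow_sub_one ht.ne']
    field_simp
  convert (Real.hasDerivAt_rpow_const (p := α) (Or.inl ht.ne')).smul (hx.sub_const L) using 1
  · rfl
  rw [← hweight]
  module

end

theorem tendsto_of_averaged_tendsto_general {H : Type*} [NormedAddCommGroup H]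
    [InnerProductSpace ℝ H] (α : ℝ) (hα : 0 < α)
    (L : H) (x x' : ℝ → H) (hderiv : ∀ t, HasDerivAt x (x' t) t)
    (hlim : Filter.Tendsto (fun t => x t + (t / α) • x' t) Filter.atTop (nhds L)) :
    Filter.Tendsto x Filter.atTop (nhds L) := by
  have hpos : ∀ᶠ t : ℝ in atTop, 0 < t := eventually_gt_atTop 0
  have hderiv_small : (fun t => (α * t ^ (α - 1)) • (x t + (t / α) • x' t - L))
      =o[atTop] fun t => α * t ^ (α - 1) :=
    ((isBigO_refl _ _).smul_isLittleO
      ((isLittleO_one_iff ℝ).2 (tendsto_sub_nhds_zero_iff.2 hlim))).congr_right (by simp)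
  refine tendsto_nhds_of_smul_sub_isLittleO (φ := fun t => t ^ α)
    (hpos.mono fun t ht => (Real.rpow_pos_of_pos ht α).ne') ?_
  refine isLittleO_atTop_of_isLittleO_deriv ?_ ?_ ?_ (tendsto_rpow_atTop hα) hderiv_small
  · exact hpos.mono fun t ht => hasDerivAt_rpow_smul_sub ht hα.ne' (hderiv t)
  · exact hpos.mono fun t ht => Real.hasDerivAt_rpow_const (Or.inl ht.ne')
  · exact hpos.mono fun t ht => by positivity

/-- If x(t) + (t/α)x'(t) → L as t → ∞, then x(t) → L. -/
theorem tendsto_of_averaged_tendsto {H : Type*} [NormedAddCommGroup H]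
    [InnerProductSpace ℝ H] [CompleteSpace H] (t₀ α : ℝ) (ht₀ : 0 < t₀) (hα : 0 < α)
    (L : H) (x x' : ℝ → H) (hderiv : ∀ t, HasDerivAt x (x' t) t)
    (hcont : Continuous x')
    (hlim : Filter.Tendsto (fun t => x t + (t / α) • x' t) Filter.atTop (nhds L)) :
    Filter.Tendsto x Filter.atTop (nhds L) :=
  tendsto_of_averaged_tendsto_general α hα L x x' hderiv hlim
end

section
/- Let Φ be proper convex lsc on a Hilbert space with minimal-norm minimizer x*, and suppose x: [t₀,∞) → H satisfies ‖x(t)‖ ≤ ‖x*‖ for all t, Φ(prox_{λ(t)Φ}(x(t))) → min Φ and ‖prox_{λ(t)Φ}(x(t)) − x(t)‖ → 0 as t → ∞. Then x(t) converges strongly to x* as t → ∞. -/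
/-!
By the parallelogram law, points of the ball `‖y‖ ≤ ‖x*‖` that are far from `x*` have
midpoints with `x*` well inside the ball. On the other hand, minimizing sequences of `Φ` cannot stay
in a ball of radius `ρ < ‖x*‖`: a convex lsc function attains its infimum on a closed ball
(nested closed convex bounded sets in a Hilbert space have nonempty intersection, since their
minimal-norm points form a Cauchy sequence), and that minimum is not `min Φ` because `x*` has
minimal norm in `argmin Φ`. Applied to the minimizing sequence `(p(t) + x*)/2`, this forces
`‖x(t) + x*‖ → 2‖x*‖`, hence `x(t) → x*`.
-/

open Filter Set Topology

section InnerProductSpace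

variable {H : Type*} [NormedAddCommGroup H] [InnerProductSpace ℝ H]

theorem norm_sub_sq_le_of_norm_le {a b : H} (h : ‖a‖ ≤ ‖b‖) :
    ‖a - b‖ ^ 2 ≤ 4 * ‖b‖ ^ 2 - ‖a + b‖ ^ 2 := by
  have := parallelogram_law_with_norm ℝ a b
  nlinarith [norm_nonneg a, norm_nonneg b]

theorem tendsto_of_norm_le_of_tendsto_norm_add {α : Type*} {l : Filter α} {x : α → H} {s : H}
    (hle : ∀ᶠ t in l, ‖x t‖ ≤ ‖s‖) (hadd : Tendsto (fun t => ‖x t + s‖) l (𝓝 (2 * ‖s‖))) :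
    Tendsto x l (𝓝 s) := by
  have hgap : Tendsto (fun t => 4 * ‖s‖ ^ 2 - ‖x t + s‖ ^ 2) l (𝓝 0) := by
    have := (tendsto_const_nhds (x := 4 * ‖s‖ ^ 2)).sub (hadd.pow 2)
    rwa [mul_pow, show (4 : ℝ) * ‖s‖ ^ 2 - 2 ^ 2 * ‖s‖ ^ 2 = 0 by ring] at this
  have hsq : Tendsto (fun t => ‖x t - s‖ ^ 2) l (𝓝 0) :=
    tendsto_of_tendsto_of_tendsto_of_le_of_le' tendsto_const_nhds hgap
      (Eventually.of_forall fun _ => sq_nonneg _)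
      (hle.mono fun _ => norm_sub_sq_le_of_norm_le)
  rw [tendsto_iff_norm_sub_tendsto_zero]
  simpa using hsq.sqrt

variable [CompleteSpace H]

theorem exists_mem_forall_norm_sub_sq_le {S : Set H} (hne : S.Nonempty) (hS : IsClosed S)
    (hconv : Convex ℝ S) : ∃ q ∈ S, ∀ w ∈ S, ‖w - q‖ ^ 2 ≤ ‖w‖ ^ 2 - ‖q‖ ^ 2 := by
  obtain ⟨q, hq, hmin⟩ :=
    exists_norm_eq_iInf_of_complete_convex hne hS.isComplete hconv 0
  refine ⟨q, hq, fun w hw => ?_⟩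
  have hinner := (norm_eq_iInf_iff_real_inner_le_zero hconv hq).1 hmin w hw
  have hexpand := norm_add_sq_real q (w - q)
  rw [add_sub_cancel] at hexpand
  rw [zero_sub, inner_neg_left] at hinner
  linarith

theorem nonempty_iInter_of_antitone_of_convex {S : ℕ → Set H} (hanti : Antitone S)
    (hne : ∀ n, (S n).Nonempty) (hclosed : ∀ n, IsClosed (S n)) (hconv : ∀ n, Convex ℝ (S n))
    (hbdd : Bornology.IsBounded (S 0)) : (⋂ n, S n).Nonempty := by
  choose q hqS hq using fun n =>
    exists_mem_forall_norm_sub_sq_le (hne n) (hclosed n) (hconv n)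
  have hstep : ∀ n m, n ≤ m → ‖q m - q n‖ ^ 2 ≤ ‖q m‖ ^ 2 - ‖q n‖ ^ 2 :=
    fun n m hnm => hq n (q m) (hanti hnm (hqS m))
  obtain ⟨R, hR⟩ := isBounded_iff_forall_norm_le.1 hbdd
  have hmono : Monotone fun n => ‖q n‖ ^ 2 := monotone_nat_of_le_succ fun n => by
    linarith [hstep n (n + 1) n.le_succ, sq_nonneg ‖q (n + 1) - q n‖]
  have hbddsq : BddAbove (range fun n => ‖q n‖ ^ 2) := ⟨R ^ 2, forall_mem_range.2 fun n =>
    pow_le_pow_left₀ (norm_nonneg _) (hR _ (hanti (Nat.zero_le n) (hqS n))) 2⟩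
  have hcauchy : CauchySeq q := by
    rw [Metric.cauchySeq_iff']
    intro ε hε
    obtain ⟨N, hN⟩ := Metric.cauchySeq_iff'.1 (tendsto_atTop_ciSup hmono hbddsq).cauchySeq
      (ε ^ 2) (by positivity)
    refine ⟨N, fun m hm => lt_of_pow_lt_pow_left₀ 2 hε.le ?_⟩
    calc dist (q m) (q N) ^ 2 = ‖q m - q N‖ ^ 2 := by rw [dist_eq_norm]
      _ ≤ ‖q m‖ ^ 2 - ‖q N‖ ^ 2 := hstep N m hm
      _ ≤ dist (‖q m‖ ^ 2) (‖q N‖ ^ 2) := le_abs_self _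
      _ < ε ^ 2 := hN m hm
  obtain ⟨L, hL⟩ := cauchySeq_tendsto_of_complete hcauchy
  exact ⟨L, mem_iInter.2 fun n => (hclosed n).mem_of_tendsto hL
    ((eventually_ge_atTop n).mono fun m hm => hanti hm (hqS m))⟩

theorem ConvexOn.exists_isMinOn_of_isBounded {K : Set H} {f : H → ℝ} (hf : ConvexOn ℝ K f)
    (hlsc : LowerSemicontinuousOn f K) (hK : IsClosed K) (hKne : K.Nonempty)
    (hKb : Bornology.IsBounded K) (hbdd : BddBelow (f '' K)) : ∃ q ∈ K, IsMinOn f K q := by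
  set m := sInf (f '' K)
  set S : ℕ → Set H := fun n => {v ∈ K | f v ≤ m + 1 / (n + 1)}
  have hanti : Antitone S := fun n k hnk v hv =>
    ⟨hv.1, hv.2.trans (add_le_add_right (Nat.one_div_le_one_div hnk) m)⟩
  have hne : ∀ n, (S n).Nonempty := by
    intro n
    obtain ⟨_, ⟨v, hv, rfl⟩, hlt⟩ := exists_lt_of_csInf_lt (hKne.image f)
      (lt_add_of_pos_right m (by positivity : (0 : ℝ) < 1 / (n + 1)))
    exact ⟨v, hv, hlt.le⟩
  have hclosed : ∀ n, IsClosed (S n) := by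
    intro n
    obtain ⟨C, hC, hKC⟩ := lowerSemicontinuousOn_iff_preimage_Iic.1 hlsc (m + 1 / (n + 1))
    exact (show S n = K ∩ C from hKC) ▸ hK.inter hC
  obtain ⟨q, hq⟩ := nonempty_iInter_of_antitone_of_convex hanti hne hclosed
    (fun n => hf.convex_le _) (hKb.subset fun _ hv => hv.1)
  have hqS := mem_iInter.1 hq
  have hlim : Tendsto (fun n : ℕ => m + 1 / (n + 1)) atTop (𝓝 m) := by
    simpa using tendsto_const_nhds.add (tendsto_one_div_add_atTop_nhds_zero_nat (𝕜 := ℝ))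
  have hqm : f q ≤ m := ge_of_tendsto' hlim fun n => (hqS n).2
  exact ⟨q, (hqS 0).1, fun v hv => hqm.trans (csInf_le hbdd (mem_image_of_mem f hv))⟩

theorem eventually_lt_norm_of_tendsto_min {Φ : H → ℝ} (hconv : ConvexOn ℝ univ Φ)
    (hlsc : LowerSemicontinuous Φ) {xstar : H} (hxstar : IsMinOn Φ univ xstar)
    (hmin : ∀ y, IsMinOn Φ univ y → ‖xstar‖ ≤ ‖y‖) {α : Type*} {l : Filter α} {v : α → H}
    (hv : Tendsto (fun t => Φ (v t)) l (𝓝 (Φ xstar))) {ρ : ℝ} (hρ : ρ < ‖xstar‖) :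
    ∀ᶠ t in l, ρ < ‖v t‖ := by
  rcases lt_or_ge ρ 0 with hρ0 | hρ0
  · exact Eventually.of_forall fun t => hρ0.trans_le (norm_nonneg _)
  obtain ⟨q, hqK, hq⟩ :=
    (hconv.subset (subset_univ _) (convex_closedBall 0 ρ)).exists_isMinOn_of_isBounded
      (hlsc.lowerSemicontinuousOn _) Metric.isClosed_closedBall
      (Metric.nonempty_closedBall.2 hρ0) Metric.isBounded_closedBall
      ⟨Φ xstar, forall_mem_image.2 fun y _ => hxstar (mem_univ y)⟩
  have hgap : Φ xstar < Φ q := by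
    by_contra! hle
    have := hmin q fun y _ => hle.trans (hxstar (mem_univ y))
    exact hρ.not_ge (this.trans (mem_closedBall_zero_iff.1 hqK))
  filter_upwards [hv.eventually (gt_mem_nhds hgap)] with t ht
  by_contra! hvt
  exact (hq (mem_closedBall_zero_iff.2 hvt)).not_gt ht

end InnerProductSpace

theorem strong_convergence_inside_ball_general {H : Type*} [NormedAddCommGroup H]
    [InnerProductSpace ℝ H] [CompleteSpace H] (Φ : H → ℝ)
    (hconv : ConvexOn ℝ Set.univ Φ) (hlsc : LowerSemicontinuous Φ)
    (xstar : H) (hxstar : IsMinOn Φ Set.univ xstar)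
    (hmin : ∀ y, IsMinOn Φ Set.univ y → ‖xstar‖ ≤ ‖y‖)
    (t₀ : ℝ)
    (x p : ℝ → H)
    (hball : ∀ t ≥ t₀, ‖x t‖ ≤ ‖xstar‖)
    (hΦ : Filter.Tendsto (fun t => Φ (p t)) Filter.atTop (nhds (Φ xstar)))
    (hdist : Filter.Tendsto (fun t => ‖p t - x t‖) Filter.atTop (nhds 0)) :
    Filter.Tendsto x Filter.atTop (nhds xstar) := by
  have hΦmid : Tendsto (fun t => Φ ((1 / 2 : ℝ) • p t + (1 / 2 : ℝ) • xstar)) atTop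
      (𝓝 (Φ xstar)) := by
    have hup : Tendsto (fun t => 1 / 2 * Φ (p t) + 1 / 2 * Φ xstar) atTop (𝓝 (Φ xstar)) := by
      have := (hΦ.const_mul (1 / 2)).add_const (1 / 2 * Φ xstar)
      rwa [← add_mul, add_halves, one_mul] at this
    exact tendsto_of_tendsto_of_tendsto_of_le_of_le tendsto_const_nhds hup
      (fun t => hxstar (mem_univ _))
      fun t => hconv.2 (mem_univ _) (mem_univ _) (by norm_num) (by norm_num) (by norm_num)
  refine tendsto_of_norm_le_of_tendsto_norm_add ((eventually_ge_atTop t₀).mono hball)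
    (tendsto_order.2 ⟨fun r hr => ?_, fun r hr => ?_⟩)
  · filter_upwards [eventually_lt_norm_of_tendsto_min hconv hlsc hxstar hmin hΦmid
        (ρ := (r + 2 * ‖xstar‖) / 4) (by linarith),
      hdist.eventually (gt_mem_nhds (show 0 < (2 * ‖xstar‖ - r) / 2 by linarith))]
      with t hfar hclose
    rw [← smul_add, norm_smul_of_nonneg (by norm_num)] at hfar
    have htri : ‖p t + xstar‖ ≤ ‖p t - x t‖ + ‖x t + xstar‖ := by
      rw [show p t + xstar = (p t - x t) + (x t + xstar) by abel]
      exact norm_add_le _ _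
    linarith
  · filter_upwards [eventually_ge_atTop t₀] with t ht
    linarith [norm_add_le (x t) xstar, hball t ht]

/-- If the trajectory stays in the ball B(0,‖x*‖), Φ(prox(x(t))) → min Φ and
‖prox(x(t)) − x(t)‖ → 0, then x(t) converges strongly to the minimal-norm minimizer x*. -/
theorem strong_convergence_inside_ball {H : Type*} [NormedAddCommGroup H]
    [InnerProductSpace ℝ H] [CompleteSpace H] (Φ : H → ℝ)
    (hconv : ConvexOn ℝ Set.univ Φ) (hlsc : LowerSemicontinuous Φ)
    (xstar : H) (hxstar : IsMinOn Φ Set.univ xstar)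
    (hmin : ∀ y, IsMinOn Φ Set.univ y → ‖xstar‖ ≤ ‖y‖)
    (t₀ : ℝ) (l : ℝ → ℝ) (hl : ∀ t ≥ t₀, 0 < l t)
    (x p : ℝ → H)
    (hp : ∀ t ≥ t₀,
      IsMinOn (fun y => Φ y + ‖x t - y‖ ^ 2 / (2 * l t)) Set.univ (p t))
    (hball : ∀ t ≥ t₀, ‖x t‖ ≤ ‖xstar‖)
    (hΦ : Filter.Tendsto (fun t => Φ (p t)) Filter.atTop (nhds (Φ xstar)))
    (hdist : Filter.Tendsto (fun t => ‖p t - x t‖) Filter.atTop (nhds 0)) :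
    Filter.Tendsto x Filter.atTop (nhds xstar) :=
  strong_convergence_inside_ball_general Φ hconv hlsc xstar hxstar hmin t₀ x p hball hΦ hdist
end
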